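/- (Cheeger inequalities for uniform hypergraphs, combined) Let Γ be a connected k-uniform hypergraph with deg(v) ≤ Σ_{w≠v} deg(w) for all v. Then h²/(2(k−1)) ≤ k − λ_{n−1} ≤ 2(k−1)h. -/

import Mathlib

open Finset

/-- The degree of a vertex: number of edges (with multiplicity) containing it. -/
def hdeg {V : Type*} [DecidableEq V] (E : Multiset (Finset V)) (v : V) : ℕ :=
  Multiset.countP (fun e => v ∈ e) E

/-- The volume of a set of vertices: sum of the degrees. -/
def hvol {V : Type*} [DecidableEq V] (E : Multiset (Finset V)) (S : Finset V) : ℕ :=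
  ∑ v ∈ S, hdeg E v

/-- `E_r(S)`: the edges `e` (with multiplicity) with `|e ∩ S| = r`. -/
def Er {V : Type*} [DecidableEq V] (E : Multiset (Finset V)) (S : Finset V) (r : ℕ) :
    Multiset (Finset V) :=
  Multiset.filter (fun e => (e ∩ S).card = r) E

/-- `|E(v,w)|`: the number of edges (with multiplicity) containing both `v` and `w`. -/
def Evw {V : Type*} [DecidableEq V] (E : Multiset (Finset V)) (v w : V) : ℕ :=
  Multiset.countP (fun e => v ∈ e ∧ w ∈ e) E

/-- The adjacency matrix: `A v w = -|E(v,w)|` for `v ≠ w` and `A v v = 0`. -/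
noncomputable def adjM {V : Type*} [Fintype V] [DecidableEq V] (E : Multiset (Finset V)) : Matrix V V ℝ :=
  Matrix.of fun v w => if v = w then 0 else -(Evw E v w : ℝ)

/-- The normalized Laplacian `L = I - D⁻¹ A`. -/
noncomputable def lapM {V : Type*} [Fintype V] [DecidableEq V] (E : Multiset (Finset V)) : Matrix V V ℝ :=
  Matrix.of fun v w => (if v = w then (1 : ℝ) else 0) - adjM E v w / (hdeg E v : ℝ)

/-- Connectedness: every pair of vertices is joined by a path of edges. -/
def HConnected {V : Type*} (E : Multiset (Finset V)) : Prop :=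
  ∀ v w : V, Relation.ReflTransGen (fun a b => ∃ e ∈ E, a ∈ e ∧ b ∈ e) v w
/-- The Rayleigh quotient of a vertex function. -/
noncomputable def RQ {V : Type*} [Fintype V] [DecidableEq V] (E : Multiset (Finset V))
    (f : V → ℝ) : ℝ :=
  (E.map (fun e => (∑ v ∈ e, f v) ^ 2)).sum / ∑ v, (hdeg E v : ℝ) * f v ^ 2

/-- The second largest eigenvalue of the normalized Laplacian, via its variational
characterization `λ_{n-1} = max {RQ f : f ≠ 0, f ⊥ 1}`. -/
noncomputable def lamSecond {V : Type*} [Fintype V] [DecidableEq V]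
    (E : Multiset (Finset V)) : ℝ :=
  sSup {x : ℝ | ∃ f : V → ℝ, f ≠ 0 ∧ (∑ v, (hdeg E v : ℝ) * f v = 0) ∧ RQ E f = x}
/-- The generalized Cheeger constant `h` of a `k`-uniform hypergraph. -/
noncomputable def cheeger {V : Type*} [Fintype V] [DecidableEq V]
    (E : Multiset (Finset V)) (k : ℕ) : ℝ :=
  sInf {x : ℝ | ∃ S : Finset V, S.Nonempty ∧ S ≠ Finset.univ ∧
    x = ((∑ r ∈ Finset.Icc 1 (k - 1), Multiset.card (Er E S r) * r * (k - r) : ℕ) : ℝ) /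
      (min (hvol E S) (hvol E Sᶜ) : ℕ)}

/-!
Write `D f = ∑ v, deg v * f v ^ 2` and `P f = ∑ e, ∑ v ∈ e, ∑ w ∈ e, (f v - f w) ^ 2`. For a
`k`-uniform hypergraph `P f = 2 k D f - 2 ∑ e, (∑ v ∈ e, f v) ^ 2`, so
`k - RQ f = P f / (2 D f)` and both inequalities are statements about `P / D` on vectors
orthogonal to the degrees. The numerator of `h` at `S` is `|∂S| = ∑ e, |e ∩ S| |e \ S|`.

Upper bound: the vector equal to `vol Sᶜ` on `S` and to `-vol S` off `S` is orthogonal to the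
degrees, and for it `P / (2 D) = |∂S| (1 / vol S + 1 / vol Sᶜ) ≤ 2 |∂S| / min (vol S) (vol Sᶜ)`.
Hence `k - λ ≤ 2 h`; for `k = 1` the numerator of `h` is an empty sum, so `h = 0`.

Lower bound: shifting `f` by a weighted median `c` does not decrease `D` and keeps `P`. The
positive and negative parts `ψ` of `f - c` are supported on at most half of the volume, so every
superlevel set of `ψ ^ 2` satisfies `h vol ≤ |∂|`. Summing over the levels (coarea) gives
`2 h D ψ ≤ ∑ e, ∑ v ∈ e, ∑ w ∈ e, |ψ v ^ 2 - ψ w ^ 2|`, and Cauchy–Schwarz bounds the right side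
by `√(P ψ * 4 (k - 1) D ψ)`. Hence `h ^ 2 D ψ ≤ (k - 1) P ψ` for both parts, and adding them gives
`h ^ 2 D f ≤ (k - 1) P f`.
-/

theorem abs_sub_eq_abs_min_sub_min_add_abs_max_sub_max (x y a : ℝ) :
    |x - y| = |min x a - min y a| + |max x a - max y a| := by
  have hx := min_add_max x a
  have hy := min_add_max y a
  rcases le_total x y with h | h
  · rw [abs_of_nonpos (sub_nonpos.2 h), abs_of_nonpos (sub_nonpos.2 (min_le_min h le_rfl)),
      abs_of_nonpos (sub_nonpos.2 (max_le_max h le_rfl))]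
    linarith
  · rw [abs_of_nonneg (sub_nonneg.2 h), abs_of_nonneg (sub_nonneg.2 (min_le_min h le_rfl)),
      abs_of_nonneg (sub_nonneg.2 (max_le_max h le_rfl))]
    linarith

theorem sq_posPart_add_sq_negPart (x : ℝ) : x⁺ ^ 2 + x⁻ ^ 2 = x ^ 2 := by
  rcases le_total 0 x with h | h <;> simp [h]

theorem sq_posPart_sub_add_sq_negPart_sub_le (x y : ℝ) :
    (x⁺ - y⁺) ^ 2 + (x⁻ - y⁻) ^ 2 ≤ (x - y) ^ 2 := by
  rcases le_total 0 x with hx | hx <;> rcases le_total 0 y with hy | hy <;>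
    simp only [posPart_eq_self.2, negPart_eq_zero.2, posPart_eq_zero.2, negPart_eq_neg.2,
      hx, hy] <;> nlinarith

theorem add_div_mul_le_two_div_min {x y : ℝ} (hx : 0 < x) (hy : 0 < y) :
    (x + y) / (x * y) ≤ 2 / min x y := by
  have hmin : 0 < min x y := lt_min hx hy
  have h1 := inv_anti₀ hmin (min_le_left x y)
  have h2 := inv_anti₀ hmin (min_le_right x y)
  rw [add_div, div_mul_cancel_left₀ hx.ne', div_mul_cancel_right₀ hy.ne', div_eq_mul_inv]
  linarith

theorem Multiset.sum_map_sq_le_sum_map_mul_sum_map {ι R : Type*} [DecidableEq ι]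
    [CommSemiring R] [LinearOrder R] [IsStrictOrderedRing R] [ExistsAddOfLE R]
    (m : Multiset ι) {r f g : ι → R} (hf : ∀ i ∈ m, 0 ≤ f i) (hg : ∀ i ∈ m, 0 ≤ g i)
    (ht : ∀ i ∈ m, r i ^ 2 ≤ f i * g i) :
    (m.map r).sum ^ 2 ≤ (m.map f).sum * (m.map g).sum := by
  simp only [← Multiset.map_univ]
  exact Finset.sum_sq_le_sum_mul_sum_of_sq_le_mul _ (fun _ _ => hf _ Multiset.coe_mem)
    (fun _ _ => hg _ Multiset.coe_mem) (fun _ _ => ht _ Multiset.coe_mem)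

theorem Finset.sum_sum_sub_sq {ι : Type*} (s : Finset ι) (f : ι → ℝ) :
    ∑ i ∈ s, ∑ j ∈ s, (f i - f j) ^ 2 =
      2 * #s * ∑ i ∈ s, f i ^ 2 - 2 * (∑ i ∈ s, f i) ^ 2 := by
  simp only [sub_sq, sum_add_distrib, sum_sub_distrib, sum_const, nsmul_eq_mul, ← mul_sum,
    ← sum_mul]
  ring

theorem Finset.sum_sum_ite_mem {ι : Type*} [DecidableEq ι] (s S : Finset ι) (a b : ℝ)
    (F : ℝ → ℝ) (hF : F 0 = 0) :
    ∑ i ∈ s, ∑ j ∈ s, F ((if i ∈ S then a else b) - (if j ∈ S then a else b)) =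
      #(s ∩ S) * #(s \ S) * (F (a - b) + F (b - a)) := by
  have hsplit (h : ι → ℝ) : ∑ i ∈ s, h i = ∑ i ∈ s ∩ S, h i + ∑ i ∈ s \ S, h i := by
    rw [← sum_filter_add_sum_filter_not s (· ∈ S), filter_mem_eq_inter,
      filter_notMem_eq_sdiff]
  have hin : ∀ i ∈ s ∩ S, (if i ∈ S then a else b) = a :=
    fun i hi => if_pos (mem_inter.1 hi).2
  have hout : ∀ i ∈ s \ S, (if i ∈ S then a else b) = b :=
    fun i hi => if_neg (mem_sdiff.1 hi).2
  simp +contextual only [hsplit, hin, hout, sum_const, nsmul_eq_mul, sub_self, hF]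
  ring

theorem Finset.sum_sum_abs_sq_sub_sq_sq_le {ι : Type*} [DecidableEq ι] (s : Finset ι)
    (ψ : ι → ℝ) :
    (∑ i ∈ s, ∑ j ∈ s, |ψ i ^ 2 - ψ j ^ 2|) ^ 2 ≤
      (∑ i ∈ s, ∑ j ∈ s, (ψ i - ψ j) ^ 2) * (4 * (#s - 1) * ∑ i ∈ s, ψ i ^ 2) := by
  -- Cauchy–Schwarz for `|x ^ 2 - y ^ 2| = |x - y| * |x + y|` over the off-diagonal pairs,
  -- followed by `(x + y) ^ 2 ≤ 2 * x ^ 2 + 2 * y ^ 2`.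
  have hcs := sum_sq_le_sum_mul_sum_of_sq_le_mul (s ×ˢ s)
    (r := fun p => |ψ p.1 ^ 2 - ψ p.2 ^ 2|) (f := fun p => (ψ p.1 - ψ p.2) ^ 2)
    (g := fun p => if p.1 = p.2 then 0 else (ψ p.1 + ψ p.2) ^ 2)
    (fun _ _ => sq_nonneg _) (fun _ _ => by positivity) fun p _ => by
      split_ifs with h
      · simp [h]
      · exact (by rw [sq_abs]; ring : _ = _).le
  simp only [sum_product] at hcs
  refine hcs.trans (mul_le_mul_of_nonneg_left ?_ (by positivity))
  have hpt (i j : ι) : (if i = j then 0 else (ψ i + ψ j) ^ 2) ≤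
      2 * ψ i ^ 2 + 2 * ψ j ^ 2 - if i = j then 4 * ψ i ^ 2 else 0 := by
    split_ifs with h
    · subst h; linarith
    · nlinarith [sq_nonneg (ψ i - ψ j)]
  refine (sum_le_sum fun i _ => sum_le_sum fun j _ => hpt i j).trans_eq ?_
  simp +contextual only [sum_sub_distrib, sum_add_distrib, sum_ite_eq, if_true, sum_const,
    nsmul_eq_mul, ← mul_sum]
  ring

section PairForms

variable {V : Type*} (E : Multiset (Finset V))

noncomputable def pairEnergy (f : V → ℝ) : ℝ :=
  (E.map fun e => ∑ v ∈ e, ∑ w ∈ e, (f v - f w) ^ 2).sum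

noncomputable def pairVariation (φ : V → ℝ) : ℝ :=
  (E.map fun e => ∑ v ∈ e, ∑ w ∈ e, |φ v - φ w|).sum

theorem pairEnergy_nonneg (f : V → ℝ) : 0 ≤ pairEnergy E f :=
  Multiset.sum_nonneg fun _ hx => by
    obtain ⟨e, -, rfl⟩ := Multiset.mem_map.1 hx
    positivity

theorem pairVariation_nonneg (φ : V → ℝ) : 0 ≤ pairVariation E φ :=
  Multiset.sum_nonneg fun _ hx => by
    obtain ⟨e, -, rfl⟩ := Multiset.mem_map.1 hx
    positivity

theorem pairEnergy_sub_const (f : V → ℝ) (c : ℝ) :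
    pairEnergy E (fun v => f v - c) = pairEnergy E f := by
  simp only [pairEnergy, sub_sub_sub_cancel_right]

theorem pairEnergy_posPart_add_pairEnergy_negPart_le (f : V → ℝ) :
    pairEnergy E f⁺ + pairEnergy E f⁻ ≤ pairEnergy E f := by
  simp only [pairEnergy, ← Multiset.sum_map_add, ← sum_add_distrib, Pi.posPart_apply,
    Pi.negPart_apply]
  exact Multiset.sum_map_le_sum_map _ _ fun e _ =>
    sum_le_sum fun v _ => sum_le_sum fun w _ => sq_posPart_sub_add_sq_negPart_sub_le _ _

theorem pairVariation_eq_min_add_max (φ : V → ℝ) (a : ℝ) :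
    pairVariation E φ =
      pairVariation E (fun v => min (φ v) a) + pairVariation E (fun v => max (φ v) a - a) := by
  simp only [pairVariation, ← Multiset.sum_map_add, ← sum_add_distrib, sub_sub_sub_cancel_right,
    ← abs_sub_eq_abs_min_sub_min_add_abs_max_sub_max]

end PairForms

section Boundary

variable {V : Type*} [DecidableEq V] (E : Multiset (Finset V))

theorem hvol_cast (S : Finset V) : (hvol E S : ℝ) = ∑ v ∈ S, (hdeg E v : ℝ) := by
  simp [hvol]

theorem hvol_pos (hdegpos : ∀ v, 0 < hdeg E v) {S : Finset V} (hS : S.Nonempty) :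
    0 < hvol E S :=
  let ⟨v, hv⟩ := hS
  sum_pos' (fun _ _ => Nat.zero_le _) ⟨v, hv, hdegpos v⟩

theorem one_le_of_hdeg_pos {k : ℕ} (hk : ∀ e ∈ E, #e = k) {v : V} (hv : 0 < hdeg E v) :
    1 ≤ k := by
  obtain ⟨e, he, hve⟩ := Multiset.countP_pos.1 hv
  exact hk e he ▸ card_pos.2 ⟨v, hve⟩

def boundary (S : Finset V) : ℕ :=
  (E.map fun e => #(e ∩ S) * #(e \ S)).sum

theorem boundary_cast (S : Finset V) :
    (boundary E S : ℝ) = (E.map fun e => (#(e ∩ S) : ℝ) * #(e \ S)).sum := by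
  simp [boundary, Nat.cast_multiset_sum, Multiset.map_map]

theorem pairEnergy_ite_mem (S : Finset V) (a b : ℝ) :
    pairEnergy E (fun v => if v ∈ S then a else b) = 2 * (a - b) ^ 2 * boundary E S := by
  rw [pairEnergy, boundary_cast, ← Multiset.sum_map_mul_left]
  congr 1
  refine Multiset.map_congr rfl fun e _ => ?_
  rw [sum_sum_ite_mem e S a b (· ^ 2) (by simp)]
  ring

theorem pairVariation_ite_mem (S : Finset V) (a : ℝ) :
    pairVariation E (fun v => if v ∈ S then a else 0) = 2 * |a| * boundary E S := by
  rw [pairVariation, boundary_cast, ← Multiset.sum_map_mul_left]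
  congr 1
  refine Multiset.map_congr rfl fun e _ => ?_
  rw [sum_sum_ite_mem e S a 0 (|·|) abs_zero, sub_zero, zero_sub, abs_neg]
  ring

theorem sum_card_Er_mul_eq_boundary {k : ℕ} (hk : ∀ e ∈ E, #e = k) (S : Finset V) :
    ∑ r ∈ Icc 1 (k - 1), Multiset.card (Er E S r) * r * (k - r) = boundary E S := by
  induction E using Multiset.induction_on with
  | empty => simp [Er, boundary]
  | cons e E ih =>
    have hcard : #(e \ S) + #(e ∩ S) = k := (card_sdiff_add_card_inter e S).trans
      (hk e (Multiset.mem_cons_self e E))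
    have hedge : ∑ r ∈ Icc 1 (k - 1), (if #(e ∩ S) = r then 1 else 0) * r * (k - r) =
        #(e ∩ S) * #(e \ S) := by
      simp only [ite_mul, one_mul, zero_mul, sum_ite_eq, mem_Icc]
      split_ifs with h
      · congr 1; omega
      · rcases Nat.eq_zero_or_pos #(e ∩ S) with h0 | h0
        · simp [h0]
        · simp [show #(e \ S) = 0 by omega]
    simp only [Er, boundary, Multiset.filter_cons, Multiset.card_add, Multiset.map_cons,
      Multiset.sum_cons] at ih ⊢
    rw [← ih fun e' he' => hk e' (Multiset.mem_cons_of_mem he'), ← hedge, ← sum_add_distrib]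
    refine sum_congr rfl fun r _ => ?_
    split_ifs <;> simp [add_mul]

end Boundary

section PositiveValues

variable {V : Type*} [Fintype V]

noncomputable def posValues (φ : V → ℝ) : Finset ℝ :=
  (univ.image φ).filter (0 < ·)

theorem card_posValues_max_sub_lt {φ : V → ℝ} {a : ℝ} (ha : a ∈ posValues φ) :
    #(posValues fun v => max (φ v) a - a) < #(posValues φ) := by
  have hsub :
      posValues (fun v => max (φ v) a - a) ⊆ ((posValues φ).erase a).image (· - a) := by
    intro x hx
    simp only [posValues, mem_filter, mem_image, mem_univ, true_and] at hx ha
    obtain ⟨⟨v, rfl⟩, hpos⟩ := hx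
    have hav : a < φ v := by
      by_contra hle
      rw [max_eq_right (not_lt.1 hle), sub_self] at hpos
      exact lt_irrefl 0 hpos
    refine mem_image.2 ⟨φ v, mem_erase.2 ⟨hav.ne', ?_⟩, by rw [max_eq_left hav.le]⟩
    simp only [posValues, mem_filter, mem_image, mem_univ, true_and]
    exact ⟨⟨v, rfl⟩, ha.2.trans hav⟩
  calc _ ≤ _ := card_le_card hsub
    _ ≤ #((posValues φ).erase a) := card_image_le
    _ < _ := card_erase_lt_of_mem ha

theorem min_eq_ite_of_forall_posValues_le {φ : V → ℝ} (hφ : ∀ v, 0 ≤ φ v) {a : ℝ}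
    (ha : 0 < a) (hmin : ∀ x ∈ posValues φ, a ≤ x) (v : V) :
    min (φ v) a = if a ≤ φ v then a else 0 := by
  split_ifs with hv
  · exact min_eq_right hv
  · have hφv : φ v = 0 := le_antisymm (not_lt.1 fun hpos => hv <| hmin _ <| by
      simp [posValues, hpos]) (hφ v)
    rw [hφv, min_eq_left ha.le]

end PositiveValues

section Spectral

variable {V : Type*} [Fintype V] [DecidableEq V] (E : Multiset (Finset V))

noncomputable def weightedNormSq (f : V → ℝ) : ℝ :=
  ∑ v, (hdeg E v : ℝ) * f v ^ 2

theorem sum_map_sum_eq_sum_hdeg_mul (g : V → ℝ) :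
    (E.map fun e => ∑ v ∈ e, g v).sum = ∑ v, (hdeg E v : ℝ) * g v := by
  induction E using Multiset.induction_on with
  | empty => simp [hdeg]
  | cons e E ih =>
    simp only [Multiset.map_cons, Multiset.sum_cons, ih, hdeg, Multiset.countP_cons]
    push_cast
    simp only [add_mul, sum_add_distrib, ite_mul, one_mul, zero_mul, sum_ite_mem, univ_inter]
    ring

theorem hvol_add_hvol_compl (S : Finset V) : hvol E S + hvol E Sᶜ = hvol E univ :=
  sum_add_sum_compl S _

theorem weightedNormSq_pos (hdegpos : ∀ v, 0 < hdeg E v) {f : V → ℝ} (hf : f ≠ 0) :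
    0 < weightedNormSq E f := by
  obtain ⟨v, hv⟩ := Function.ne_iff.1 hf
  have : f v ≠ 0 := hv
  have := hdegpos v
  exact sum_pos' (fun _ _ => by positivity) ⟨v, mem_univ v, by positivity⟩

theorem weightedNormSq_sub_const {f : V → ℝ} (hf : ∑ v, (hdeg E v : ℝ) * f v = 0) (c : ℝ) :
    weightedNormSq E (fun v => f v - c) = weightedNormSq E f + c ^ 2 * hvol E univ := by
  have hsq (v : V) : (hdeg E v : ℝ) * (f v - c) ^ 2 =
      (hdeg E v : ℝ) * f v ^ 2 + c ^ 2 * hdeg E v - 2 * c * ((hdeg E v : ℝ) * f v) := by ring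
  simp only [weightedNormSq, hsq, sum_sub_distrib, sum_add_distrib, ← mul_sum, hf, hvol_cast]
  ring

theorem weightedNormSq_posPart_add_weightedNormSq_negPart (f : V → ℝ) :
    weightedNormSq E f⁺ + weightedNormSq E f⁻ = weightedNormSq E f := by
  simp only [weightedNormSq, ← sum_add_distrib, ← mul_add, Pi.posPart_apply, Pi.negPart_apply,
    sq_posPart_add_sq_negPart]

theorem pairEnergy_eq {k : ℕ} (hk : ∀ e ∈ E, #e = k) (f : V → ℝ) :
    pairEnergy E f =
      2 * k * weightedNormSq E f - 2 * (E.map fun e => (∑ v ∈ e, f v) ^ 2).sum := by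
  rw [weightedNormSq, ← sum_map_sum_eq_sum_hdeg_mul, ← Multiset.sum_map_mul_left,
    ← Multiset.sum_map_mul_left, ← Multiset.sum_map_sub, pairEnergy]
  refine congrArg _ (Multiset.map_congr rfl fun e he => ?_)
  rw [sum_sum_sub_sq, hk e he]

theorem sub_RQ_eq {k : ℕ} (hk : ∀ e ∈ E, #e = k) (hdegpos : ∀ v, 0 < hdeg E v) {f : V → ℝ}
    (hf : f ≠ 0) : (k : ℝ) - RQ E f = pairEnergy E f / (2 * weightedNormSq E f) := by
  have hD := (weightedNormSq_pos E hdegpos hf).ne'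
  rw [pairEnergy_eq E hk, RQ, ← weightedNormSq]
  field_simp

theorem RQ_le {k : ℕ} (hk : ∀ e ∈ E, #e = k) (hdegpos : ∀ v, 0 < hdeg E v) {f : V → ℝ}
    (hf : f ≠ 0) : RQ E f ≤ k := by
  have hgap : 0 ≤ (k : ℝ) - RQ E f := by
    rw [sub_RQ_eq E hk hdegpos hf]
    exact div_nonneg (pairEnergy_nonneg E f) (by linarith [weightedNormSq_pos E hdegpos hf])
  linarith

theorem sum_hdeg_mul_ite_mem (S : Finset V) (a b : ℝ) :
    ∑ v, (hdeg E v : ℝ) * (if v ∈ S then a else b) = a * hvol E S + b * hvol E Sᶜ := by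
  rw [← sum_add_sum_compl S, hvol_cast, hvol_cast, mul_sum, mul_sum]
  congr 1 <;> refine sum_congr rfl fun v hv => ?_
  · rw [if_pos hv, mul_comm]
  · rw [if_neg (mem_compl.1 hv), mul_comm]

noncomputable def cutVector (S : Finset V) (v : V) : ℝ :=
  if v ∈ S then (hvol E Sᶜ : ℝ) else -(hvol E S : ℝ)

theorem sum_hdeg_mul_cutVector (S : Finset V) :
    ∑ v, (hdeg E v : ℝ) * cutVector E S v = 0 := by
  simp only [cutVector, sum_hdeg_mul_ite_mem]
  ring

theorem weightedNormSq_cutVector (S : Finset V) :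
    weightedNormSq E (cutVector E S) =
      hvol E S * hvol E Sᶜ * (hvol E S + hvol E Sᶜ) := by
  simp only [weightedNormSq, cutVector, ite_pow, sum_hdeg_mul_ite_mem]
  ring

theorem pairEnergy_cutVector (S : Finset V) :
    pairEnergy E (cutVector E S) = 2 * (hvol E S + hvol E Sᶜ) ^ 2 * boundary E S := by
  unfold cutVector
  rw [pairEnergy_ite_mem, sub_neg_eq_add, add_comm (hvol E Sᶜ : ℝ)]

theorem cutVector_ne_zero (hdegpos : ∀ v, 0 < hdeg E v) {S : Finset V} (hS : S.Nonempty)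
    (hSc : Sᶜ.Nonempty) : cutVector E S ≠ 0 := by
  obtain ⟨v, hv⟩ := hS
  have := hvol_pos E hdegpos hSc
  refine Function.ne_iff.2 ⟨v, ?_⟩
  simp only [cutVector, if_pos hv, Pi.zero_apply]
  positivity

theorem sub_RQ_cutVector_le {k : ℕ} (hk : ∀ e ∈ E, #e = k) (hdegpos : ∀ v, 0 < hdeg E v)
    {S : Finset V} (hS : S.Nonempty) (hSc : Sᶜ.Nonempty) :
    (k : ℝ) - RQ E (cutVector E S) ≤
      2 * ((boundary E S : ℝ) / (min (hvol E S) (hvol E Sᶜ) : ℕ)) := by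
  have hvS : (0 : ℝ) < hvol E S := by exact_mod_cast hvol_pos E hdegpos hS
  have hvSc : (0 : ℝ) < hvol E Sᶜ := by exact_mod_cast hvol_pos E hdegpos hSc
  rw [sub_RQ_eq E hk hdegpos (cutVector_ne_zero E hdegpos hS hSc), pairEnergy_cutVector,
    weightedNormSq_cutVector, Nat.cast_min]
  calc _ = boundary E S * ((hvol E S + hvol E Sᶜ) / (hvol E S * hvol E Sᶜ) : ℝ) := by
        field_simp
    _ ≤ boundary E S * (2 / min (hvol E S : ℝ) (hvol E Sᶜ)) :=
        mul_le_mul_of_nonneg_left (add_div_mul_le_two_div_min hvS hvSc) (by positivity)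
    _ = _ := by ring

theorem exists_ne_of_hdeg_le_sum {v : V} (hv : 0 < hdeg E v)
    (hass : hdeg E v ≤ ∑ w ∈ univ.erase v, hdeg E w) : ∃ w, w ≠ v := by
  obtain ⟨w, hw⟩ := nonempty_of_sum_ne_zero (by omega : ∑ w ∈ univ.erase v, hdeg E w ≠ 0)
  exact ⟨w, ne_of_mem_erase hw⟩

theorem compl_singleton_nonempty {v w : V} (hvw : v ≠ w) : ({v}ᶜ : Finset V).Nonempty :=
  ⟨w, by simpa using hvw.symm⟩

theorem RQ_le_lamSecond {k : ℕ} (hk : ∀ e ∈ E, #e = k) (hdegpos : ∀ v, 0 < hdeg E v)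
    {f : V → ℝ} (hf : f ≠ 0) (hmean : ∑ v, (hdeg E v : ℝ) * f v = 0) :
    RQ E f ≤ lamSecond E :=
  le_csSup ⟨k, by rintro _ ⟨g, hg, -, rfl⟩; exact RQ_le E hk hdegpos hg⟩ ⟨f, hf, hmean, rfl⟩

theorem lamSecond_le (hdegpos : ∀ v, 0 < hdeg E v) {v w : V} (hvw : v ≠ w) {b : ℝ}
    (h : ∀ f : V → ℝ, f ≠ 0 → ∑ v, (hdeg E v : ℝ) * f v = 0 → RQ E f ≤ b) :
    lamSecond E ≤ b := by
  refine csSup_le ⟨_, cutVector E {v}, ?_, sum_hdeg_mul_cutVector E {v}, rfl⟩ ?_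
  · exact cutVector_ne_zero E hdegpos (singleton_nonempty v) (compl_singleton_nonempty hvw)
  · rintro _ ⟨f, hf, hmean, rfl⟩
    exact h f hf hmean

theorem cheeger_nonneg (k : ℕ) : 0 ≤ cheeger E k :=
  Real.sInf_nonneg <| by rintro _ ⟨S, -, -, rfl⟩; positivity

theorem cheeger_one : cheeger E 1 = 0 :=
  le_antisymm (Real.sInf_nonpos <| by rintro _ ⟨S, -, -, rfl⟩; simp) (cheeger_nonneg E 1)

theorem cheeger_le {k : ℕ} (hk : ∀ e ∈ E, #e = k) {S : Finset V} (hS : S.Nonempty)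
    (hSu : S ≠ univ) :
    cheeger E k ≤ (boundary E S : ℝ) / (min (hvol E S) (hvol E Sᶜ) : ℕ) := by
  rw [← sum_card_Er_mul_eq_boundary E hk]
  exact csInf_le ⟨0, by rintro _ ⟨S, -, -, rfl⟩; positivity⟩ ⟨S, hS, hSu, rfl⟩

theorem le_cheeger {k : ℕ} (hk : ∀ e ∈ E, #e = k) {v w : V} (hvw : v ≠ w) {b : ℝ}
    (h : ∀ S : Finset V, S.Nonempty → S ≠ univ →
      b ≤ (boundary E S : ℝ) / (min (hvol E S) (hvol E Sᶜ) : ℕ)) :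
    b ≤ cheeger E k := by
  refine le_csInf ⟨_, {v}, singleton_nonempty v, ?_, rfl⟩ ?_
  · exact fun h => (compl_singleton_nonempty hvw).ne_empty (by simp [h])
  · rintro _ ⟨S, hS, hSu, rfl⟩
    rw [sum_card_Er_mul_eq_boundary E hk]
    exact h S hS hSu

theorem sub_lamSecond_le_two_mul_cheeger {k : ℕ} (hk : ∀ e ∈ E, #e = k)
    (hdegpos : ∀ v, 0 < hdeg E v) {v w : V} (hvw : v ≠ w) :
    (k : ℝ) - lamSecond E ≤ 2 * cheeger E k := by
  rw [← div_le_iff₀' two_pos]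
  refine le_cheeger E hk hvw fun S hS hSu => ?_
  have hSc : Sᶜ.Nonempty := nonempty_iff_ne_empty.2 (by rwa [Ne, compl_eq_empty_iff])
  have := RQ_le_lamSecond E hk hdegpos (cutVector_ne_zero E hdegpos hS hSc)
    (sum_hdeg_mul_cutVector E S)
  have := sub_RQ_cutVector_le E hk hdegpos hS hSc
  rw [div_le_iff₀' two_pos]
  linarith

theorem pairVariation_sq_sq_le {k : ℕ} (hk : ∀ e ∈ E, #e = k) (ψ : V → ℝ) :
    pairVariation E (fun v => ψ v ^ 2) ^ 2 ≤
      pairEnergy E ψ * (4 * (k - 1) * weightedNormSq E ψ) := by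
  have hg (e : Finset V) : 0 ≤ 4 * ((#e : ℝ) - 1) * ∑ v ∈ e, ψ v ^ 2 := by
    rcases e.eq_empty_or_nonempty with rfl | he
    · simp
    · have : (1 : ℝ) ≤ #e := by exact_mod_cast he.card_pos
      exact mul_nonneg (by linarith) (sum_nonneg fun _ _ => sq_nonneg _)
  rw [pairVariation, pairEnergy, weightedNormSq, ← sum_map_sum_eq_sum_hdeg_mul,
    ← Multiset.sum_map_mul_left]
  exact Multiset.sum_map_sq_le_sum_map_mul_sum_map E (fun _ _ => by positivity)
    (fun e he => hk e he ▸ hg e) fun e he => hk e he ▸ sum_sum_abs_sq_sub_sq_sq_le e ψ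

theorem two_mul_sum_hdeg_mul_le_pairVariation {c : ℝ} {φ : V → ℝ} (hφ : ∀ v, 0 ≤ φ v)
    (h : ∀ t > 0, c * hvol E {v | t ≤ φ v} ≤ boundary E {v | t ≤ φ v}) :
    2 * c * ∑ v, (hdeg E v : ℝ) * φ v ≤ pairVariation E φ := by
  induction hn : #(posValues φ) using Nat.strong_induction_on generalizing φ with
  | _ n ih =>
    rcases (posValues φ).eq_empty_or_nonempty with hP | hP
    · have hφ0 (v : V) : φ v = 0 := by
        refine le_antisymm (not_lt.1 fun hv => ?_) (hφ v)
        exact (eq_empty_iff_forall_notMem.1 hP) (φ v) (by simp [posValues, hv])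
      simp only [hφ0, mul_zero, sum_const_zero]
      exact pairVariation_nonneg E φ
    -- Peel off the lowest positive level `a`: `φ = min φ a + (max φ a - a)`, where `min φ a` is
    -- `a` times the indicator of `{a ≤ φ}` and `max φ a - a` has one positive value fewer.
    set a := (posValues φ).min' hP
    have haP : a ∈ posValues φ := min'_mem _ hP
    have ha : 0 < a := (mem_filter.1 haP).2
    set S : Finset V := {v | a ≤ φ v}
    have hlow : (fun v => min (φ v) a) = fun v => if v ∈ S then a else 0 := by
      funext v
      simp only [S, mem_filter, mem_univ, true_and]
      exact min_eq_ite_of_forall_posValues_le hφ ha (fun x hx => min'_le _ x hx) v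
    have htop := ih _ (hn ▸ card_posValues_max_sub_lt haP)
      (φ := fun v => max (φ v) a - a) (fun v => sub_nonneg.2 (le_max_right _ _)) (fun t ht => by
        simp only [le_sub_iff_add_le, le_max_iff, add_le_iff_nonpos_left, ht.not_ge, or_false]
        exact h (t + a) (by positivity)) rfl
    have hsplit : ∑ v, (hdeg E v : ℝ) * φ v = ∑ v, (hdeg E v : ℝ) * (if v ∈ S then a else 0) +
        ∑ v, (hdeg E v : ℝ) * (max (φ v) a - a) := by
      rw [← sum_add_distrib]
      refine sum_congr rfl fun v _ => ?_
      rw [← congrFun hlow v, ← mul_add]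
      congr 1
      linarith [min_add_max (φ v) a]
    rw [pairVariation_eq_min_add_max E φ a, hlow, pairVariation_ite_mem, abs_of_pos ha, hsplit,
      sum_hdeg_mul_ite_mem, mul_add]
    nlinarith [h a ha]

theorem cheeger_mul_hvol_le_boundary {k : ℕ} (hk : ∀ e ∈ E, #e = k)
    (hdegpos : ∀ v, 0 < hdeg E v) {S : Finset V} (hS : S.Nonempty)
    (hS2 : 2 * hvol E S ≤ hvol E univ) : cheeger E k * hvol E S ≤ boundary E S := by
  have hpos := hvol_pos E hdegpos hS
  have hsum := hvol_add_hvol_compl E S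
  have hSu : S ≠ univ := by
    rintro rfl
    omega
  have h := cheeger_le E hk hS hSu
  rwa [min_eq_left (by omega), le_div_iff₀ (by exact_mod_cast hpos)] at h

theorem cheeger_sq_mul_weightedNormSq_le_of_nonneg {k : ℕ} (hk : ∀ e ∈ E, #e = k) (hk1 : 1 ≤ k)
    (hdegpos : ∀ v, 0 < hdeg E v) {ψ : V → ℝ} (hψ : ∀ v, 0 ≤ ψ v)
    (hsupp : 2 * hvol E {v | 0 < ψ v} ≤ hvol E univ) :
    cheeger E k ^ 2 * weightedNormSq E ψ ≤ (k - 1) * pairEnergy E ψ := by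
  have hcoarea : 2 * cheeger E k * weightedNormSq E ψ ≤ pairVariation E (fun v => ψ v ^ 2) :=
    two_mul_sum_hdeg_mul_le_pairVariation E (fun v => sq_nonneg _) fun t ht => by
      rcases ({v | t ≤ ψ v ^ 2} : Finset V).eq_empty_or_nonempty with hS | hS
      · simp [hS, hvol]
      · refine cheeger_mul_hvol_le_boundary E hk hdegpos hS (le_trans ?_ hsupp)
        refine Nat.mul_le_mul_left 2 (sum_le_sum_of_subset fun v hv => ?_)
        simp only [mem_filter, mem_univ, true_and] at hv ⊢
        exact (hψ v).lt_of_ne fun h0 => by rw [← h0] at hv; linarith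
  have hcs := pairVariation_sq_sq_le E hk ψ
  have hD : 0 ≤ weightedNormSq E ψ := sum_nonneg fun v _ => by positivity
  have hh := cheeger_nonneg E k
  have hk1' : (1 : ℝ) ≤ k := by exact_mod_cast hk1
  rcases hD.eq_or_lt with hD0 | hDpos
  · rw [← hD0, mul_zero]
    exact mul_nonneg (by linarith) (pairEnergy_nonneg E ψ)
  · have : (2 * cheeger E k * weightedNormSq E ψ) ^ 2 ≤
        pairEnergy E ψ * (4 * (k - 1) * weightedNormSq E ψ) :=
      (pow_le_pow_left₀ (by positivity) hcoarea 2).trans hcs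
    nlinarith

theorem exists_median [Nonempty V] (f : V → ℝ) :
    ∃ c, 2 * hvol E {v | c < f v} ≤ hvol E univ ∧ 2 * hvol E {v | f v < c} ≤ hvol E univ := by
  have hsplit (c : ℝ) : hvol E {v | f v ≤ c} + hvol E {v | c < f v} = hvol E univ := by
    simpa only [compl_filter, not_le] using hvol_add_hvol_compl E {v | f v ≤ c}
  obtain ⟨m, -, hm⟩ := exists_max_image univ f univ_nonempty
  have hm' : univ.filter (fun v => f v ≤ f m) = univ :=
    filter_true_of_mem fun v _ => hm v (mem_univ v)
  have hT : (univ.filter fun u => hvol E univ ≤ 2 * hvol E {v | f v ≤ f u}).Nonempty :=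
    ⟨m, by simp only [mem_filter, mem_univ, true_and, hm']; omega⟩
  obtain ⟨u, hu, humin⟩ := exists_min_image _ f hT
  simp only [mem_filter, mem_univ, true_and] at hu
  refine ⟨f u, by linarith [hsplit (f u)], ?_⟩
  rcases (univ.filter fun v => f v < f u).eq_empty_or_nonempty with hlt | hlt
  · simp [hlt, hvol]
  obtain ⟨u', hu', humax⟩ := exists_max_image _ f hlt
  have hu'lt : f u' < f u := by simpa using hu'
  have hset : univ.filter (fun v => f v < f u) = univ.filter (fun v => f v ≤ f u') := by
    ext v
    simp only [mem_filter, mem_univ, true_and]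
    exact ⟨fun h => humax v (by simpa using h), fun h => h.trans_lt hu'lt⟩
  have hnot : u' ∉ univ.filter fun u => hvol E univ ≤ 2 * hvol E {v | f v ≤ f u} :=
    fun h => (humin u' h).not_gt hu'lt
  simp only [mem_filter, mem_univ, true_and, not_le] at hnot
  rw [hset]
  exact hnot.le

theorem cheeger_sq_mul_weightedNormSq_le_of_sum_eq_zero [Nonempty V] {k : ℕ}
    (hk : ∀ e ∈ E, #e = k) (hk1 : 1 ≤ k) (hdegpos : ∀ v, 0 < hdeg E v) {f : V → ℝ}
    (hmean : ∑ v, (hdeg E v : ℝ) * f v = 0) :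
    cheeger E k ^ 2 * weightedNormSq E f ≤ (k - 1) * pairEnergy E f := by
  obtain ⟨c, hc_above, hc_below⟩ := exists_median E f
  set g : V → ℝ := fun v => f v - c
  have hpos : univ.filter (fun v => 0 < g⁺ v) = univ.filter (fun v => c < f v) := by
    simp [g, posPart_pos_iff, sub_pos]
  have hneg : univ.filter (fun v => 0 < g⁻ v) = univ.filter (fun v => f v < c) := by
    simp [g, negPart_pos_iff, sub_neg]
  have hk1' : (0 : ℝ) ≤ k - 1 := sub_nonneg.2 (by exact_mod_cast hk1)
  calc cheeger E k ^ 2 * weightedNormSq E f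
      ≤ cheeger E k ^ 2 * weightedNormSq E g := by
        rw [weightedNormSq_sub_const E hmean]
        gcongr
        exact le_add_of_nonneg_right (by positivity)
    _ = cheeger E k ^ 2 * weightedNormSq E g⁺ + cheeger E k ^ 2 * weightedNormSq E g⁻ := by
        rw [← mul_add, weightedNormSq_posPart_add_weightedNormSq_negPart]
    _ ≤ (k - 1) * pairEnergy E g⁺ + (k - 1) * pairEnergy E g⁻ :=
        add_le_add
          (cheeger_sq_mul_weightedNormSq_le_of_nonneg E hk hk1 hdegpos (fun v => posPart_nonneg _)
            (hpos ▸ hc_above))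
          (cheeger_sq_mul_weightedNormSq_le_of_nonneg E hk hk1 hdegpos (fun v => negPart_nonneg _)
            (hneg ▸ hc_below))
    _ ≤ (k - 1) * pairEnergy E f := by
        rw [← mul_add, ← pairEnergy_sub_const E f c]
        exact mul_le_mul_of_nonneg_left
          (pairEnergy_posPart_add_pairEnergy_negPart_le E g) hk1'

theorem cheeger_sq_div_le_sub_lamSecond [Nonempty V] {k : ℕ} (hk : ∀ e ∈ E, #e = k)
    (hk1 : 1 ≤ k) (hdegpos : ∀ v, 0 < hdeg E v) {v w : V} (hvw : v ≠ w) :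
    cheeger E k ^ 2 / (2 * (k - 1)) ≤ k - lamSecond E := by
  rw [le_sub_comm]
  refine lamSecond_le E hdegpos hvw fun f hf hmean => ?_
  have hD := weightedNormSq_pos E hdegpos hf
  have hkey := cheeger_sq_mul_weightedNormSq_le_of_sum_eq_zero E hk hk1 hdegpos hmean
  rw [le_sub_comm, sub_RQ_eq E hk hdegpos hf]
  have hk1' : (0 : ℝ) ≤ k - 1 := sub_nonneg.2 (by exact_mod_cast hk1)
  refine div_le_of_le_mul₀ (by positivity) (div_nonneg (pairEnergy_nonneg E f) (by positivity)) ?_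
  rw [div_mul_eq_mul_div, le_div_iff₀ (by positivity)]
  linarith

end Spectral

theorem stmt8_general {V : Type*} [Fintype V] [DecidableEq V] [Nonempty V]
    (E : Multiset (Finset V)) (k : ℕ)
    (hk : ∀ e ∈ E, e.card = k) (hdegpos : ∀ v, 0 < hdeg E v)
    (hass : ∀ v : V, hdeg E v ≤ ∑ w ∈ Finset.univ.erase v, hdeg E w) :
    cheeger E k ^ 2 / (2 * ((k : ℝ) - 1)) ≤ (k : ℝ) - lamSecond E ∧
      (k : ℝ) - lamSecond E ≤ 2 * ((k : ℝ) - 1) * cheeger E k := by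
  obtain ⟨v⟩ := ‹Nonempty V›
  obtain ⟨w, hwv⟩ := exists_ne_of_hdeg_le_sum E (hdegpos v) (hass v)
  have hk1 : 1 ≤ k := one_le_of_hdeg_pos E hk (hdegpos v)
  refine ⟨cheeger_sq_div_le_sub_lamSecond E hk hk1 hdegpos hwv.symm, ?_⟩
  calc (k : ℝ) - lamSecond E ≤ 2 * cheeger E k :=
        sub_lamSecond_le_two_mul_cheeger E hk hdegpos hwv.symm
    _ ≤ 2 * (k - 1) * cheeger E k := by
        obtain rfl | hk2 := hk1.eq_or_lt
        · simp [cheeger_one]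
        · have : (2 : ℝ) ≤ k := by exact_mod_cast hk2
          nlinarith [cheeger_nonneg E k]

theorem stmt8 {V : Type*} [Fintype V] [DecidableEq V] [Nonempty V]
    (E : Multiset (Finset V)) (k : ℕ)
    (hk : ∀ e ∈ E, e.card = k) (hconn : HConnected E) (hdegpos : ∀ v, 0 < hdeg E v)
    (hass : ∀ v : V, hdeg E v ≤ ∑ w ∈ Finset.univ.erase v, hdeg E w) :
    cheeger E k ^ 2 / (2 * ((k : ℝ) - 1)) ≤ (k : ℝ) - lamSecond E ∧
      (k : ℝ) - lamSecond E ≤ 2 * ((k : ℝ) - 1) * cheeger E k :=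
  stmt8_general E k hk hdegpos hass
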